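/- arXiv:1812.03059 — 2 statements merged into one kernel-verified Lean document; each statement's English description precedes it below -/
import Mathlib

section
/- Suppose U−L ≥ 4. Then the limit function β(x)=lim_{k→∞} β_k(x), defined for integers x with L ≤ x ≤ U, satisfies: β(U)=1; β(U−1)=p+q·β(U−2); β(U−2)=p²+pq·β(U−2)+q·β(U−3); for every integer x with L+1 ≤ x ≤ U−3, β(x)=pq·β(x)+p·β(x+2)−pq·β(x+1)+q·β(x−1); and β(L)=0. Moreover β is the unique function on the integers of [L,U] satisfying this system of linear equations. -/
/-!
Recording whether the previous step went up makes the ladder walk Markov. Conditioning on the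
first sign gives, for `L < x < U`, the first-step equations `β(x) = p γ(x+1) + q β(x-1)` and
`γ(y) = p γ(y+2) + q β(y-1)`, where `γ` is the exit probability of a walk whose last step went up.
They hold exactly for the `k`-step probabilities, which are sums over the `2^k` sign patterns,
and pass to the limit since `γ_k` increases with `k`. Eliminating `γ` gives the system. For
uniqueness, a solution of the homogeneous system is monotone on `[L, U]` and vanishes at both ends.
-/

open MeasureTheory ProbabilityTheory Filter
open scoped ENNReal Classical

noncomputable section

variable {Ω : Type*} [MeasurableSpace Ω]

/-- The `k`-th step of the ladder chain `L(2,2,p)` built from the driving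
sequence `ξ` (indexed from 1): `X₁ = ±1` according to `ξ₁`, and for `k ≥ 2`,
`X_k = -1` if `ξ_k = -1`, `X_k = 2` if `ξ_k = ξ_{k-1} = 1`, and `X_k = 1`
if `ξ_k = 1, ξ_{k-1} = -1`. -/
def ladderX (ξ : ℕ → Ω → ℤ) (k : ℕ) (ω : Ω) : ℤ :=
  if k = 1 then (if ξ 1 ω = 1 then 1 else -1)
  else if ξ k ω = -1 then -1
  else if ξ (k - 1) ω = 1 then 2 else 1

/-- The ladder chain `S_n = X₁ + ⋯ + X_n` (with `S_0 = 0`). -/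
def ladderS (ξ : ℕ → Ω → ℤ) (n : ℕ) (ω : Ω) : ℤ :=
  ∑ k ∈ Finset.Icc 1 n, ladderX ξ k ω

/-- The truncated exit time `τ_k^x`: the least `l ≤ k` with `S_l^x ≤ L` or
`S_l^x ≥ U`, and `k` if there is no such `l`. -/
def ladderTau (ξ : ℕ → Ω → ℤ) (L U x : ℤ) (k : ℕ) (ω : Ω) : ℕ :=
  if ∃ l ≤ k, (x + ladderS ξ l ω ≤ L ∨ U ≤ x + ladderS ξ l ω)
  then sInf {l | l ≤ k ∧ (x + ladderS ξ l ω ≤ L ∨ U ≤ x + ladderS ξ l ω)}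
  else k

/-- The event `A_k^x`: the walk started at `x` exits through the lower
barrier `L` within the first `k` steps. -/
def ladderA (ξ : ℕ → Ω → ℤ) (L U x : ℤ) (k : ℕ) : Set Ω :=
  ⋃ l ∈ Finset.range (k + 1),
    {ω | ladderTau ξ L U x k ω = l ∧ x + ladderS ξ l ω ≤ L}

/-- The event `B_k^x`: the walk started at `x` exits through the upper
barrier `U` within the first `k` steps. -/
def ladderB (ξ : ℕ → Ω → ℤ) (L U x : ℤ) (k : ℕ) : Set Ω :=
  ⋃ l ∈ Finset.range (k + 1),
    {ω | ladderTau ξ L U x k ω = l ∧ U ≤ x + ladderS ξ l ω}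

/-- The linear difference system (7) of the paper for the upper-exit
probability `β`. -/
def betaSystem (p q : ℝ) (L U : ℤ) (f : ℤ → ℝ) : Prop :=
  f U = 1 ∧
  f (U - 1) = p + q * f (U - 2) ∧
  f (U - 2) = p ^ 2 + p * q * f (U - 2) + q * f (U - 3) ∧
  (∀ x : ℤ, L + 1 ≤ x → x ≤ U - 3 →
    f x = p * q * f x + p * f (x + 2) - p * q * f (x + 1) + q * f (x - 1)) ∧
  f L = 0

open Topology

def ladderStep (up b : Bool) : ℤ := if b then (if up then 2 else 1) else -1

/-- Position after `n` steps of the ladder walk driven by the signs `s 0, s 1, …`, where `up`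
says whether the step before `s 0` went up; the walk `S` of the paper is `ladderWalk false`. -/
def ladderWalk : Bool → (ℕ → Bool) → ℕ → ℤ
  | _, _, 0 => 0
  | up, s, n + 1 => ladderStep up (s 0) + ladderWalk (s 0) (fun i => s (i + 1)) n

theorem ladderWalk_congr {s s' : ℕ → Bool} {n : ℕ} (h : ∀ i < n, s i = s' i) (up : Bool) :
    ladderWalk up s n = ladderWalk up s' n := by
  induction n generalizing up s s' with
  | zero => rfl
  | succ n ih =>
    simp only [ladderWalk, h 0 n.succ_pos, ih fun i hi => h (i + 1) (by omega)]

theorem ladderWalk_succ_right (up : Bool) (s : ℕ → Bool) (n : ℕ) :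
    ladderWalk up s (n + 1) =
      ladderWalk up s n + ladderStep (if n = 0 then up else s (n - 1)) (s n) := by
  induction n generalizing up s with
  | zero => simp [ladderWalk]
  | succ n ih =>
    rw [ladderWalk, ih]
    cases n <;> simp [ladderWalk, add_assoc]

theorem ladderS_eq_ladderWalk {α : Type*} {ξ : ℕ → α → ℤ} {a : α}
    (hval : ∀ n, ξ n a = 1 ∨ ξ n a = -1) (n : ℕ) :
    ladderS ξ n a = ladderWalk false (fun i => decide (ξ (i + 1) a = 1)) n := by
  induction n with
  | zero => simp [ladderS, ladderWalk]
  | succ n ih =>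
    rw [ladderS, Finset.sum_Icc_succ_top (Nat.le_add_left 1 n), ← ladderS, ih,
      ladderWalk_succ_right]
    congr 1
    rcases n with _ | n
    · rcases hval 1 with h | h <;> simp [ladderX, ladderStep, h]
    · rcases hval (n + 1) with h | h <;> rcases hval (n + 2) with h' | h' <;>
        simp [ladderX, ladderStep, h, h']

def ExitsUp (L U : ℤ) (w : ℕ → ℤ) (k : ℕ) : Prop :=
  ∃ t ≤ k, (∀ m < t, L < w m ∧ w m < U) ∧ U ≤ w t

section ExitsUp

variable {L U : ℤ} {w w' : ℕ → ℤ} {k : ℕ}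

theorem exitsUp_congr (h : ∀ l ≤ k, w l = w' l) : ExitsUp L U w k ↔ ExitsUp L U w' k := by
  refine exists_congr fun t => and_congr_right fun ht => and_congr (forall₂_congr fun m hm => ?_) ?_
  · rw [h m (by omega)]
  · rw [h t ht]

theorem exitsUp_of_le (h : U ≤ w 0) : ExitsUp L U w k :=
  ⟨0, k.zero_le, fun _ hm => absurd hm (Nat.not_lt_zero _), h⟩

theorem not_exitsUp_of_le (hLU : L < U) (h : w 0 ≤ L) : ¬ExitsUp L U w k := by
  rintro ⟨t, -, hbefore, hU⟩
  rcases t.eq_zero_or_pos with rfl | ht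
  · omega
  · have := (hbefore 0 ht).1
    omega

theorem not_exitsUp_zero (h : w 0 < U) : ¬ExitsUp L U w 0 := by
  rintro ⟨t, ht, -, hU⟩
  obtain rfl : t = 0 := by omega
  omega

theorem exitsUp_succ (hL : L < w 0) (hU : w 0 < U) :
    ExitsUp L U w (k + 1) ↔ ExitsUp L U (fun l => w (l + 1)) k := by
  constructor
  · rintro ⟨_ | t, ht, hbefore, hexit⟩
    · omega
    · exact ⟨t, by omega, fun m hm => hbefore (m + 1) (by omega), hexit⟩
  · rintro ⟨t, ht, hbefore, hexit⟩
    refine ⟨t + 1, by omega, fun m hm => ?_, hexit⟩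
    rcases m with _ | m
    · exact ⟨hL, hU⟩
    · exact hbefore m (by omega)

end ExitsUp

theorem ladderTau_eq_iff {α : Type*} {ξ : ℕ → α → ℤ} {L U x : ℤ} {k l : ℕ} {a : α} (hl : l ≤ k)
    (hexit : x + ladderS ξ l a ≤ L ∨ U ≤ x + ladderS ξ l a) :
    ladderTau ξ L U x k a = l ↔
      ∀ m < l, L < x + ladderS ξ m a ∧ x + ladderS ξ m a < U := by
  have hne : {m | m ≤ k ∧ (x + ladderS ξ m a ≤ L ∨ U ≤ x + ladderS ξ m a)}.Nonempty :=
    ⟨l, hl, hexit⟩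
  rw [ladderTau, if_pos ⟨l, hl, hexit⟩]
  constructor
  · rintro hτ m hm
    have := Nat.notMem_of_lt_sInf (hτ ▸ hm : m < sInf _)
    simp only [Set.mem_ofPred_eq, not_and, not_or, not_le] at this
    exact this (by omega)
  · intro hbefore
    refine le_antisymm (Nat.sInf_le ⟨hl, hexit⟩) (not_lt.1 fun hlt => ?_)
    have hmem : _ ∨ _ := (Nat.sInf_mem hne).2
    have := hbefore _ hlt
    omega

theorem mem_ladderB_iff {α : Type*} {ξ : ℕ → α → ℤ} {L U x : ℤ} {k : ℕ} {a : α} :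
    a ∈ ladderB ξ L U x k ↔ ExitsUp L U (fun l => x + ladderS ξ l a) k := by
  simp only [ladderB, Set.mem_iUnion, Finset.mem_range, Set.mem_ofPred_eq, exists_prop,
    Nat.lt_succ_iff]
  constructor
  · rintro ⟨l, hl, hτ, hU⟩
    exact ⟨l, hl, (ladderTau_eq_iff hl (Or.inr hU)).1 hτ, hU⟩
  · rintro ⟨t, ht, hbefore, hU⟩
    exact ⟨t, ht, (ladderTau_eq_iff ht (Or.inr hU)).2 hbefore, hU⟩

def bernoulliProb {ι : Type*} [Fintype ι] [DecidableEq ι] (p : ℝ) (G : (ι → Bool) → Prop) : ℝ :=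
  ∑ s, if G s then ∏ i, (if s i then p else 1 - p) else 0

section BernoulliProb

variable {ι : Type*} [Fintype ι] [DecidableEq ι] {p : ℝ}

theorem bernoulliProb_of_forall {G : (ι → Bool) → Prop} (hG : ∀ s, G s) :
    bernoulliProb p G = 1 := by
  simp only [bernoulliProb, hG, if_true]
  rw [← Fintype.prod_sum fun (_ : ι) (b : Bool) => if b then p else 1 - p]
  simp

theorem bernoulliProb_of_forall_not {G : (ι → Bool) → Prop} (hG : ∀ s, ¬G s) :
    bernoulliProb p G = 0 := by
  simp [bernoulliProb, hG]

theorem bernoulliProb_succ {k : ℕ} (G : (Fin (k + 1) → Bool) → Prop) :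
    bernoulliProb p G = p * bernoulliProb p (fun t => G (Fin.cons true t)) +
      (1 - p) * bernoulliProb p (fun t => G (Fin.cons false t)) := by
  set F : (Fin (k + 1) → Bool) → ℝ := fun s => if G s then ∏ i, (if s i then p else 1 - p) else 0
  rw [bernoulliProb, ← Fintype.sum_equiv (Fin.consEquiv fun _ => Bool)
      (fun bt => F (Fin.cons bt.1 bt.2)) F fun _ => rfl, Fintype.sum_prod_type, Fintype.sum_bool]
  simp [F, bernoulliProb, Fin.prod_univ_succ, Finset.mul_sum]

variable {P : Measure Ω} [IsProbabilityMeasure P]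

theorem toReal_measure_eq_bernoulliProb {σ : ι → Ω → Bool} (hσ : ∀ i, Measurable (σ i))
    (hind : iIndepFun σ P) (hp0 : 0 ≤ p) (hp1 : p ≤ 1)
    (hσp : ∀ i, P (σ i ⁻¹' {true}) = ENNReal.ofReal p) (G : (ι → Bool) → Prop) :
    (P {ω | G fun i => σ i ω}).toReal = bernoulliProb p G := by
  have hmarginal : ∀ i b, P (σ i ⁻¹' {b}) = ENNReal.ofReal (if b then p else 1 - p) := by
    rintro i (_ | _)
    · rw [if_neg Bool.false_ne_true, ENNReal.ofReal_sub _ hp0, ENNReal.ofReal_one, ← hσp i,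
        ← prob_compl_eq_one_sub (hσ i (measurableSet_singleton _))]
      congr 1
      ext ω
      simp
    · exact hσp i
  have hatom : ∀ s : ι → Bool, P ((fun ω i => σ i ω) ⁻¹' {s}) =
      ENNReal.ofReal (∏ i, if s i then p else 1 - p) := by
    intro s
    have hinter : (fun ω i => σ i ω) ⁻¹' {s} = ⋂ i ∈ Finset.univ, σ i ⁻¹' {s i} := by
      ext ω
      simp [funext_iff]
    rw [hinter, hind.measure_inter_preimage_eq_mul _ fun _ _ => measurableSet_singleton _,
      ENNReal.ofReal_prod_of_nonneg fun i _ => by split_ifs <;> linarith]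
    exact Finset.prod_congr rfl fun i _ => hmarginal i (s i)
  have hevent : {ω | G fun i => σ i ω} =
      (fun ω i => σ i ω) ⁻¹' ↑(Finset.univ.filter G) := by
    ext ω
    simp
  rw [hevent, ← sum_measure_preimage_singleton _
      fun s _ => measurable_pi_lambda _ hσ (measurableSet_singleton s),
    ENNReal.toReal_sum fun s _ => measure_ne_top _ _, Finset.sum_filter, bernoulliProb]
  refine Finset.sum_congr rfl fun s _ => ?_
  split_ifs
  · rw [hatom, ENNReal.toReal_ofReal (Finset.prod_nonneg fun i _ => by split_ifs <;> linarith)]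
  · rfl

end BernoulliProb

def vecToSeq {k : ℕ} (s : Fin k → Bool) (i : ℕ) : Bool := if h : i < k then s ⟨i, h⟩ else false

theorem vecToSeq_cons_zero {k : ℕ} (b : Bool) (t : Fin k → Bool) :
    vecToSeq (Fin.cons b t : Fin (k + 1) → Bool) 0 = b := by
  simp [vecToSeq]

theorem vecToSeq_cons_succ {k : ℕ} (b : Bool) (t : Fin k → Bool) (i : ℕ) :
    vecToSeq (Fin.cons b t : Fin (k + 1) → Bool) (i + 1) = vecToSeq t i := by
  by_cases hi : i < k
  · simp [vecToSeq, hi, ← Fin.succ_mk]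
  · simp [vecToSeq, hi]

/-- The probability that `x + ladderWalk up` exits upward within `k` steps
(`bernoulliProb_exitsUp`), by first-step analysis. -/
def exitProb (p : ℝ) (L U : ℤ) : Bool → ℤ → ℕ → ℝ
  | _, x, 0 => if U ≤ x then 1 else 0
  | up, x, k + 1 =>
    if U ≤ x then 1
    else if x ≤ L then 0
    else p * exitProb p L U true (x + ladderStep up true) k +
      (1 - p) * exitProb p L U false (x - 1) k

section ExitProb

variable {p : ℝ} {L U : ℤ}

theorem exitProb_eq_one_of_le {x : ℤ} (hx : U ≤ x) (up : Bool) (k : ℕ) :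
    exitProb p L U up x k = 1 := by
  cases k <;> simp [exitProb, hx]

theorem exitProb_eq_zero_of_le (hLU : L < U) {x : ℤ} (hx : x ≤ L) (up : Bool) (k : ℕ) :
    exitProb p L U up x k = 0 := by
  have : ¬U ≤ x := by omega
  cases k <;> simp [exitProb, hx, this]

theorem exitProb_succ {x : ℤ} (hL : L < x) (hU : x < U) (up : Bool) (k : ℕ) :
    exitProb p L U up x (k + 1) = p * exitProb p L U true (x + ladderStep up true) k +
      (1 - p) * exitProb p L U false (x - 1) k := by
  simp [exitProb, not_le.2 hL, not_le.2 hU]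

theorem bernoulliProb_exitsUp (hLU : L < U) (k : ℕ) (up : Bool) (x : ℤ) :
    bernoulliProb p (fun s : Fin k → Bool =>
      ExitsUp L U (fun l => x + ladderWalk up (vecToSeq s) l) k) = exitProb p L U up x k := by
  induction k generalizing up x with
  | zero =>
    by_cases hU : U ≤ x
    · rw [exitProb_eq_one_of_le hU,
        bernoulliProb_of_forall fun _ => exitsUp_of_le (by simpa [ladderWalk])]
    · rw [exitProb, if_neg hU,
        bernoulliProb_of_forall_not fun _ => not_exitsUp_zero (by simp [ladderWalk]; omega)]
  | succ k ih =>
    by_cases hU : U ≤ x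
    · rw [exitProb_eq_one_of_le hU,
        bernoulliProb_of_forall fun _ => exitsUp_of_le (by simpa [ladderWalk])]
    by_cases hL : x ≤ L
    · rw [exitProb_eq_zero_of_le hLU hL, bernoulliProb_of_forall_not fun _ =>
        not_exitsUp_of_le hLU (by simpa [ladderWalk])]
    have hstart : ∀ s : ℕ → Bool, L < x + ladderWalk up s 0 ∧ x + ladderWalk up s 0 < U :=
      fun s => by simp [ladderWalk]; omega
    rw [bernoulliProb_succ, exitProb_succ (not_le.1 hL) (not_le.1 hU), ← ih, ← ih]
    congr 3 <;> funext t <;>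
      refine propext ((exitsUp_succ (hstart _).1 (hstart _).2).trans
        (exitsUp_congr fun l _ => ?_)) <;>
      simp [ladderWalk, ladderStep, vecToSeq_cons_zero, vecToSeq_cons_succ, add_assoc,
        sub_eq_add_neg]

theorem exitProb_mem_Icc (hp0 : 0 ≤ p) (hp1 : p ≤ 1) (k : ℕ) (up : Bool) (x : ℤ) :
    exitProb p L U up x k ∈ Set.Icc 0 1 := by
  induction k generalizing up x with
  | zero => unfold exitProb; split_ifs <;> norm_num
  | succ k ih =>
    unfold exitProb
    split_ifs
    · norm_num
    · norm_num
    · obtain ⟨h0, h1⟩ := ih true (x + ladderStep up true)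
      obtain ⟨h0', h1'⟩ := ih false (x - 1)
      constructor <;> nlinarith

theorem exitProb_monotone (hp0 : 0 ≤ p) (hp1 : p ≤ 1) (up : Bool) (x : ℤ) :
    Monotone (exitProb p L U up x) := by
  suffices ∀ k up x, exitProb p L U up x k ≤ exitProb p L U up x (k + 1) from
    monotone_nat_of_le_succ fun k => this k up x
  intro k
  induction k with
  | zero =>
    intro up x
    by_cases hU : U ≤ x
    · rw [exitProb_eq_one_of_le hU, exitProb_eq_one_of_le hU]
    · rw [exitProb, if_neg hU]
      exact (exitProb_mem_Icc hp0 hp1 1 up x).1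
  | succ k ih =>
    intro up x
    conv_lhs => rw [exitProb]
    conv_rhs => rw [exitProb]
    split_ifs
    · rfl
    · rfl
    · exact add_le_add (mul_le_mul_of_nonneg_left (ih _ _) hp0)
        (mul_le_mul_of_nonneg_left (ih _ _) (by linarith))

theorem exists_tendsto_exitProb (hp0 : 0 ≤ p) (hp1 : p ≤ 1) (up : Bool) (x : ℤ) :
    ∃ a, Tendsto (exitProb p L U up x) atTop (𝓝 a) :=
  ⟨_, tendsto_atTop_ciSup (exitProb_monotone hp0 hp1 up x)
    ⟨1, by rintro _ ⟨k, rfl⟩; exact (exitProb_mem_Icc hp0 hp1 k up x).2⟩⟩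

end ExitProb

theorem toReal_measure_ladderB {P : Measure Ω} [IsProbabilityMeasure P] {ξ : ℕ → Ω → ℤ}
    {p : ℝ} (hmeas : ∀ n, Measurable (ξ n)) (hindep : iIndepFun ξ P)
    (hval : ∀ n ω, ξ n ω = 1 ∨ ξ n ω = -1)
    (hprob : ∀ n, 1 ≤ n → P {ω | ξ n ω = 1} = ENNReal.ofReal p) (hp0 : 0 ≤ p) (hp1 : p ≤ 1)
    {L U : ℤ} (hLU : L < U) (x : ℤ) (k : ℕ) :
    (P (ladderB ξ L U x k)).toReal = exitProb p L U false x k := by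
  set σ : Fin k → Ω → Bool := fun i ω => decide (ξ (i + 1) ω = 1)
  have hσ : ∀ i, Measurable (σ i) := fun i =>
    (Measurable.of_discrete (f := fun z : ℤ => decide (z = 1))).comp (hmeas _)
  have hind : iIndepFun σ P :=
    (hindep.comp (fun _ z => decide (z = 1)) fun _ => Measurable.of_discrete).precomp
      (g := fun i : Fin k => (i : ℕ) + 1) fun i j h => Fin.ext (by simpa using h)
  have hσp : ∀ i, P (σ i ⁻¹' {true}) = ENNReal.ofReal p := fun i => by
    simpa [σ, Set.preimage] using hprob _ (Nat.le_add_left 1 i)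
  let G (s : Fin k → Bool) : Prop := ExitsUp L U (fun l => x + ladderWalk false (vecToSeq s) l) k
  have hevent : ladderB ξ L U x k = {ω | G fun i => σ i ω} := by
    ext ω
    refine mem_ladderB_iff.trans (exitsUp_congr fun l hl => ?_)
    rw [ladderS_eq_ladderWalk (hval · ω)]
    exact congrArg (x + ·)
      (ladderWalk_congr (fun i hi => by simp [vecToSeq, σ, show i < k by omega]) _)
  rw [hevent, toReal_measure_eq_bernoulliProb hσ hind hp0 hp1 hσp G, bernoulliProb_exitsUp hLU]

theorem eq_of_tendsto_succ {u v w : ℕ → ℝ} {a c d p q : ℝ} (hu : Tendsto u atTop (𝓝 a))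
    (hv : Tendsto v atTop (𝓝 c)) (hw : Tendsto w atTop (𝓝 d))
    (h : ∀ k, w (k + 1) = p * u k + q * v k) : d = p * a + q * c :=
  tendsto_nhds_unique ((tendsto_add_atTop_iff_nat 1).2 hw)
    (by simpa only [h] using (hu.const_mul p).add (hv.const_mul q))

theorem betaSystem_of_firstStep {p : ℝ} {L U : ℤ} {b g : ℤ → ℝ} (hLU : L + 3 ≤ U)
    (hbU : b U = 1) (hbL : b L = 0) (hgU : ∀ y, U ≤ y → g y = 1)
    (hb : ∀ x, L < x → x < U → b x = p * g (x + 1) + (1 - p) * b (x - 1))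
    (hg : ∀ y, L < y → y < U → g y = p * g (y + 2) + (1 - p) * b (y - 1)) :
    betaSystem p (1 - p) L U b := by
  refine ⟨hbU, ?_, ?_, fun x hx1 hx2 => ?_, hbL⟩
  · have e := hb (U - 1) (by omega) (by omega)
    rw [sub_add_cancel, hgU U le_rfl] at e
    ring_nf at e ⊢
    linear_combination e
  · have e1 := hb (U - 2) (by omega) (by omega)
    have e2 := hg (U - 1) (by omega) (by omega)
    rw [hgU (U - 1 + 2) (by omega)] at e2
    ring_nf at e1 e2 ⊢
    linear_combination e1 + p * e2
  · have e1 := hb x (by omega) (by omega)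
    have e2 := hg (x + 1) (by omega) (by omega)
    have e3 := hb (x + 2) (by omega) (by omega)
    ring_nf at e1 e2 e3 ⊢
    linear_combination e1 + p * e2 - p * e3

theorem betaSystem_of_tendsto {p : ℝ} (hp0 : 0 ≤ p) (hp1 : p ≤ 1) {L U : ℤ} (hLU : L + 3 ≤ U)
    {b : ℤ → ℝ} (hb : ∀ x, L ≤ x → x ≤ U → Tendsto (exitProb p L U false x) atTop (𝓝 (b x))) :
    betaSystem p (1 - p) L U b := by
  choose g hg using exists_tendsto_exitProb (L := L) (U := U) hp0 hp1 true
  have hconst : ∀ {x a} up, (∀ k, exitProb p L U up x k = a) →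
      Tendsto (exitProb p L U up x) atTop (𝓝 a) := fun _ h =>
    tendsto_const_nhds.congr fun k => (h k).symm
  refine betaSystem_of_firstStep (g := g) hLU ?_ ?_ (fun y hy => ?_) (fun x hx1 hx2 => ?_)
    (fun y hy1 hy2 => ?_)
  · exact tendsto_nhds_unique (hb U (by omega) le_rfl) (hconst _ (exitProb_eq_one_of_le le_rfl _))
  · exact tendsto_nhds_unique (hb L le_rfl (by omega))
      (hconst _ (exitProb_eq_zero_of_le (by omega) le_rfl _))
  · exact tendsto_nhds_unique (hg y) (hconst _ (exitProb_eq_one_of_le hy _))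
  · exact eq_of_tendsto_succ (hg _) (hb (x - 1) (by omega) (by omega)) (hb x (by omega) (by omega))
      fun k => by simpa [ladderStep] using exitProb_succ hx1 hx2 false k
  · exact eq_of_tendsto_succ (hg _) (hb (y - 1) (by omega) (by omega)) (hg y)
      fun k => by simpa [ladderStep] using exitProb_succ hy1 hy2 true k

def betaSystemHom (p : ℝ) (L U : ℤ) (h : ℤ → ℝ) : Prop :=
  h U = 0 ∧
  h (U - 1) = (1 - p) * h (U - 2) ∧
  h (U - 2) = p * (1 - p) * h (U - 2) + (1 - p) * h (U - 3) ∧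
  (∀ x : ℤ, L + 1 ≤ x → x ≤ U - 3 →
    h x = p * (1 - p) * h x + p * h (x + 2) - p * (1 - p) * h (x + 1) + (1 - p) * h (x - 1)) ∧
  h L = 0

theorem betaSystem.sub {p : ℝ} {L U : ℤ} {b c : ℤ → ℝ} (hc : betaSystem p (1 - p) L U c)
    (hb : betaSystem p (1 - p) L U b) : betaSystemHom p L U (c - b) := by
  obtain ⟨hc0, hc1, hc2, hc3, hc4⟩ := hc
  obtain ⟨hb0, hb1, hb2, hb3, hb4⟩ := hb
  refine ⟨?_, ?_, ?_, fun x hx1 hx2 => ?_, ?_⟩ <;> simp only [Pi.sub_apply]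
  · linear_combination hc0 - hb0
  · linear_combination hc1 - hb1
  · linear_combination hc2 - hb2
  · linear_combination hc3 x hx1 hx2 - hb3 x hx1 hx2
  · linear_combination hc4 - hb4

namespace betaSystemHom

variable {p : ℝ} {L U : ℤ} {h : ℤ → ℝ}

theorem neg (hh : betaSystemHom p L U h) : betaSystemHom p L U (-h) := by
  obtain ⟨h0, h1, h2, h3, h4⟩ := hh
  refine ⟨?_, ?_, ?_, fun x hx1 hx2 => ?_, ?_⟩ <;> simp only [Pi.neg_apply]
  · linear_combination -h0
  · linear_combination -h1
  · linear_combination -h2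
  · linear_combination -h3 x hx1 hx2
  · linear_combination -h4

/-- With `D x = h x - h (x + 1)`, the interior equations read
`(1 - p) D (x - 1) = p² D x + p D (x + 1)`, so `D` keeps the sign of `D (U - 1) = (1 - p) h (U - 2)`
all the way down to `L`. -/
theorem antitoneOn (hp0 : 0 ≤ p) (hp1 : p < 1) (hh : betaSystemHom p L U h)
    (hc : 0 ≤ h (U - 2)) : AntitoneOn h (Set.Icc L U) := by
  obtain ⟨h0, h1, h2, h3, -⟩ := hh
  have hq : 0 < 1 - p := by linarith
  have hD2 : h (U - 1) ≤ h (U - 2) := by nlinarith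
  have hD3 : h (U - 2) ≤ h (U - 3) := by
    have : (1 - p) * (h (U - 3) - h (U - 2)) = p ^ 2 * h (U - 2) := by linear_combination -h2
    nlinarith [mul_nonneg (sq_nonneg p) hc]
  have hdown : ∀ x ≤ U - 3, L ≤ x → h (x + 1) ≤ h x ∧ h (x + 2) ≤ h (x + 1) := by
    intro x hx
    induction x, hx using Int.leInductionDown with
    | base =>
      intro _
      rw [show U - 3 + 1 = U - 2 by ring, show U - 3 + 2 = U - 1 by ring]
      exact ⟨hD3, hD2⟩
    | pred n hn ih =>
      intro hL
      obtain ⟨hn1, hn2⟩ := ih (by omega)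
      have : (1 - p) * (h (n - 1) - h n) =
          p ^ 2 * (h n - h (n + 1)) + p * (h (n + 1) - h (n + 2)) := by
        linear_combination -h3 n (by omega) hn
      rw [sub_add_cancel, show n - 1 + 2 = n + 1 by ring]
      refine ⟨?_, hn1⟩
      nlinarith [mul_nonneg (sq_nonneg p) (sub_nonneg.2 hn1), mul_nonneg hp0 (sub_nonneg.2 hn2)]
  refine antitoneOn_of_succ_le Set.ordConnected_Icc fun x _ hx hx' => ?_
  rw [Order.succ_eq_add_one] at hx' ⊢
  obtain hxU | rfl | rfl : x ≤ U - 3 ∨ x = U - 2 ∨ x = U - 1 := by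
    have := hx'.2
    omega
  · exact (hdown x hxU hx.1).1
  · rwa [show U - 2 + 1 = U - 1 by ring]
  · rw [sub_add_cancel, h0, h1]
    exact mul_nonneg hq.le hc

theorem eq_zero (hp0 : 0 ≤ p) (hp1 : p < 1) (hh : betaSystemHom p L U h) :
    ∀ x ∈ Set.Icc L U, h x = 0 := by
  wlog hc : 0 ≤ h (U - 2) generalizing h
  · intro x hx
    simpa using this hh.neg (by simp only [Pi.neg_apply]; linarith) x hx
  intro x hx
  have hanti := hh.antitoneOn hp0 hp1 hc
  obtain ⟨hU, -, -, -, hL⟩ := hh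
  have hLU : L ≤ U := hx.1.trans hx.2
  linarith [hanti ⟨le_rfl, hLU⟩ hx hx.1, hanti hx ⟨hLU, le_rfl⟩ hx.2]

end betaSystemHom

/-- The limit `β(x) = lim_k β_k(x)` satisfies the linear
difference system (7), and is the unique solution of that system on the
integers of `[L, U]`. -/
theorem ladder_beta_system_unique (p q : ℝ) (hp0 : 0 < p) (hp1 : p < 1) (hq : q = 1 - p)
    (P : Measure Ω) [IsProbabilityMeasure P]
    (ξ : ℕ → Ω → ℤ) (hmeas : ∀ n, Measurable (ξ n))
    (hindep : iIndepFun ξ P)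
    (hval : ∀ n ω, ξ n ω = 1 ∨ ξ n ω = -1)
    (hprob : ∀ n, 1 ≤ n → P {ω | ξ n ω = 1} = ENNReal.ofReal p)
    (L U : ℤ) (hLU : U - L ≥ 4)
    (b : ℤ → ℝ)
    (hb : ∀ x : ℤ, L ≤ x → x ≤ U →
      Tendsto (fun k => (P (ladderB ξ L U x k)).toReal) atTop (nhds (b x))) :
    betaSystem p q L U b ∧
    ∀ c : ℤ → ℝ, betaSystem p q L U c →
      ∀ x : ℤ, L ≤ x → x ≤ U → c x = b x := by
  subst hq
  have hβ : ∀ x k, (P (ladderB ξ L U x k)).toReal = exitProb p L U false x k :=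
    toReal_measure_ladderB hmeas hindep hval hprob hp0.le hp1.le (by omega)
  have hb' : ∀ x, L ≤ x → x ≤ U → Tendsto (exitProb p L U false x) atTop (𝓝 (b x)) := by
    simpa only [hβ] using hb
  have hsys := betaSystem_of_tendsto hp0.le hp1.le (by omega) hb'
  exact ⟨hsys, fun c hc x hx1 hx2 =>
    sub_eq_zero.1 ((hc.sub hsys).eq_zero hp0.le hp1 x ⟨hx1, hx2⟩)⟩

end
end

section
/- For every k ≥ 2, β_k(U−2) = p² + pq·β_{k−2}(U−2) + q·β_{k−1}(U−3), where U−L ≥ 4. -/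
open MeasureTheory ProbabilityTheory Filter
open scoped ENNReal Classical

noncomputable section

variable {Ω : Type*} [MeasurableSpace Ω]

/-!
Condition on the first two signs. Two up-steps lead from `U - 2` through `U - 1` to `U + 1`.
An up-step followed by a down-step returns the walk to `U - 2`, and a single down-step takes it
to `U - 3 > L`. A step following a down-step is `±1`, exactly like a first step, so from then on
the walk is a fresh copy driven by the shifted sequence `ξ (· + a)`; that sequence is
independent of the first `a` signs and has the same law as `ξ` on the indices `≥ 1`.
-/

section Paths

variable {α β : Type*} {ξ : ℕ → α → ℤ} {L U x : ℤ} {m : ℕ} {ω : α}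

@[simp]
lemma ladderS_zero (ξ : ℕ → α → ℤ) (ω : α) : ladderS ξ 0 ω = 0 := by
  simp [ladderS]

lemma ladderS_succ (ξ : ℕ → α → ℤ) (n : ℕ) (ω : α) :
    ladderS ξ (n + 1) ω = ladderS ξ n ω + ladderX ξ (n + 1) ω := by
  rw [ladderS, ladderS, Finset.sum_Icc_succ_top (by omega)]

lemma mem_ladderB_iff_s6 :
    ω ∈ ladderB ξ L U x m ↔ ∃ l ≤ m, U ≤ x + ladderS ξ l ω ∧
      ∀ j < l, L < x + ladderS ξ j ω ∧ x + ladderS ξ j ω < U := by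
  set T : Set ℕ := {l | l ≤ m ∧ (x + ladderS ξ l ω ≤ L ∨ U ≤ x + ladderS ξ l ω)}
  have hτ (hT : T.Nonempty) : ladderTau ξ L U x m ω = sInf T := by
    obtain ⟨l, hl⟩ := hT
    rw [ladderTau, if_pos ⟨l, hl⟩]
  simp only [ladderB, Set.mem_iUnion, Finset.mem_range, Set.mem_ofPred_eq, exists_prop]
  constructor
  · rintro ⟨l, hl, hτl, hU⟩
    have hlT : l ∈ T := ⟨by omega, Or.inr hU⟩
    refine ⟨l, by omega, hU, fun j hj => ?_⟩
    have hjT : j ∉ T := Nat.notMem_of_lt_sInf (by rwa [← hτ ⟨l, hlT⟩, hτl])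
    simp only [T, Set.mem_ofPred_eq, not_and, not_or, not_le] at hjT
    exact hjT (by omega)
  · rintro ⟨l, hl, hU, hin⟩
    have hlT : l ∈ T := ⟨hl, Or.inr hU⟩
    have hmin : sInf T = l := by
      refine le_antisymm (Nat.sInf_le hlT) (not_lt.1 fun hlt => ?_)
      have := hin _ hlt
      rcases (Nat.sInf_mem ⟨l, hlT⟩ : sInf T ∈ T).2 with h | h <;> omega
    exact ⟨l, by omega, by rw [hτ ⟨l, hlT⟩, hmin], hU⟩

lemma ladderX_congr {η : ℕ → β → ℤ} {ω' : β} {k : ℕ} (hk : 1 ≤ k)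
    (h : ∀ i, 1 ≤ i → i ≤ k → ξ i ω = η i ω') :
    ladderX ξ k ω = ladderX η k ω' := by
  rcases eq_or_ne k 1 with rfl | hk1
  · simp [ladderX, h 1 le_rfl le_rfl]
  · simp [ladderX, hk1, h k hk le_rfl, h (k - 1) (by omega) (by omega)]

lemma mem_ladderB_congr {η : ℕ → β → ℤ} {ω' : β}
    (h : ∀ i, 1 ≤ i → i ≤ m → ξ i ω = η i ω') :
    ω ∈ ladderB ξ L U x m ↔ ω' ∈ ladderB η L U x m := by
  have hS : ∀ l ≤ m, ladderS ξ l ω = ladderS η l ω' := fun l hl =>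
    Finset.sum_congr rfl fun i hi => by
      rw [Finset.mem_Icc] at hi
      exact ladderX_congr hi.1 fun j hj hji => h j hj (by omega)
  rw [mem_ladderB_iff_s6, mem_ladderB_iff_s6]
  refine exists_congr fun l => and_congr_right fun hl => ?_
  rw [hS l hl]
  refine and_congr_right fun _ => forall₂_congr fun j hj => ?_
  rw [hS j (by omega)]

lemma ladderX_add_of_eq_neg_one (hval : ∀ n ω, ξ n ω = 1 ∨ ξ n ω = -1) {a : ℕ}
    (hξ : ξ a ω = -1) (l : ℕ) :
    ladderX ξ (a + l + 1) ω = ladderX (fun n ω => ξ (n + a) ω) (l + 1) ω := by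
  rcases Nat.eq_zero_or_pos l with rfl | hl
  · rcases Nat.eq_zero_or_pos a with rfl | ha
    · simp
    · rcases hval (a + 1) ω with h | h <;> simp [ladderX, hξ, h, add_comm 1 a, ha.ne']
  · simp only [ladderX, show a + l + 1 ≠ 1 by omega, show l + 1 ≠ 1 by omega, if_false,
      show l + 1 + a = a + l + 1 by omega, show l + 1 - 1 + a = a + l + 1 - 1 by omega]

lemma ladderS_add_of_eq_neg_one (hval : ∀ n ω, ξ n ω = 1 ∨ ξ n ω = -1) {a : ℕ}
    (hξ : ξ a ω = -1) (l : ℕ) :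
    ladderS ξ (a + l) ω = ladderS ξ a ω + ladderS (fun n ω => ξ (n + a) ω) l ω := by
  induction l with
  | zero => simp
  | succ l ih =>
    rw [← add_assoc, ladderS_succ, ih, ladderS_succ,
      ladderX_add_of_eq_neg_one hval hξ, add_assoc]

lemma mem_ladderB_iff_shift (hval : ∀ n ω, ξ n ω = 1 ∨ ξ n ω = -1) {a : ℕ}
    (ham : a ≤ m) (hξ : ξ a ω = -1)
    (hin : ∀ j < a, L < x + ladderS ξ j ω ∧ x + ladderS ξ j ω < U) :
    ω ∈ ladderB ξ L U x m ↔
      ω ∈ ladderB (fun n ω => ξ (n + a) ω) L U (x + ladderS ξ a ω) (m - a) := by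
  have key (j : ℕ) : x + ladderS ξ (a + j) ω
      = x + ladderS ξ a ω + ladderS (fun n ω => ξ (n + a) ω) j ω := by
    rw [ladderS_add_of_eq_neg_one hval hξ, add_assoc]
  rw [mem_ladderB_iff_s6, mem_ladderB_iff_s6]
  constructor
  · rintro ⟨l, hl, hU, hlin⟩
    obtain ⟨l, rfl⟩ : ∃ l', l = a + l' := by
      refine Nat.exists_eq_add_of_le (not_lt.1 fun hla => ?_)
      have := hin l hla
      omega
    refine ⟨l, by omega, by rwa [← key], fun j hj => ?_⟩
    rw [← key]
    exact hlin (a + j) (by omega)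
  · rintro ⟨l, hl, hU, hlin⟩
    refine ⟨a + l, by omega, by rwa [key], fun j hj => ?_⟩
    rcases lt_or_ge j a with hja | hja
    · exact hin j hja
    · obtain ⟨j, rfl⟩ := Nat.exists_eq_add_of_le hja
      rw [key]
      exact hlin j (by omega)

lemma ladderB_eq_union_of_first_two_steps (hval : ∀ n ω, ξ n ω = 1 ∨ ξ n ω = -1)
    (hLU : U - L ≥ 4) (m : ℕ) :
    ladderB ξ L U (U - 2) (m + 2) =
      (ξ 1 ⁻¹' {1} ∩ ξ 2 ⁻¹' {1}) ∪
      (ξ 1 ⁻¹' {1} ∩ ξ 2 ⁻¹' {-1} ∩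
        ladderB (fun n ω => ξ (n + 2) ω) L U (U - 2) m) ∪
      (ξ 1 ⁻¹' {-1} ∩ ladderB (fun n ω => ξ (n + 1) ω) L U (U - 3) (m + 1)) := by
  ext ω
  have hS1 : ladderS ξ 1 ω = if ξ 1 ω = 1 then 1 else -1 := by
    rw [← zero_add 1, ladderS_succ]
    simp [ladderX]
  have hS2 : ladderS ξ 2 ω = ladderS ξ 1 ω + ladderX ξ 2 ω := ladderS_succ ξ 1 ω
  simp only [Set.mem_union, Set.mem_inter_iff, Set.mem_preimage, Set.mem_singleton_iff]
  rcases hval 1 ω with h1 | h1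
  · have hS1' : ladderS ξ 1 ω = 1 := by simp [hS1, h1]
    have hin : ∀ j < 2, L < U - 2 + ladderS ξ j ω ∧ U - 2 + ladderS ξ j ω < U := by
      intro j hj
      interval_cases j <;> simp only [ladderS_zero, hS1'] <;> omega
    rcases hval 2 ω with h2 | h2
    · have hS2' : ladderS ξ 2 ω = 3 := by simp [hS2, hS1', h1, h2, ladderX]
      simp only [h1, h2, true_and, true_or, iff_true]
      exact mem_ladderB_iff_s6.2 ⟨2, by omega, by omega, hin⟩
    · have hS2' : ladderS ξ 2 ω = 0 := by simp [hS2, hS1', h2, ladderX]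
      have h := mem_ladderB_iff_shift hval (m := m + 2) (a := 2) (by omega) h2 hin
      rw [hS2', add_zero, Nat.add_sub_cancel] at h
      simpa [h1, h2] using h
  · have hS1' : ladderS ξ 1 ω = -1 := by simp [hS1, h1]
    have h := mem_ladderB_iff_shift hval (L := L) (U := U) (x := U - 2) (m := m + 2) (a := 1)
      (by omega) h1 fun j hj => by
        obtain rfl : j = 0 := by omega
        rw [ladderS_zero]
        omega
    rw [hS1', show U - 2 + -1 = U - 3 by ring] at h
    simpa [h1] using h

end Paths

section Windows

variable {α : Type*} {ξ : ℕ → α → ℤ} {L U x : ℤ} {a m : ℕ}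

def ladderWindow (ξ : ℕ → α → ℤ) (a m : ℕ) (ω : α) : Fin m → ℤ :=
  fun i => ξ (i + 1 + a) ω

-- A vector `v : Fin m → ℤ` read as a driving sequence indexed from 1, so `ξ n = v (n - 1)`.
def finSeq (m n : ℕ) (v : Fin m → ℤ) : ℤ :=
  if h : n - 1 < m then v ⟨n - 1, h⟩ else 0

lemma ladderB_shift_eq_preimage :
    ladderB (fun n ω => ξ (n + a) ω) L U x m =
      ladderWindow ξ a m ⁻¹' ladderB (finSeq m) L U x m := by
  ext ω
  refine mem_ladderB_congr fun i hi him => ?_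
  simp [finSeq, ladderWindow, show i - 1 < m by omega, Nat.sub_add_cancel hi]

lemma measurableSet_ladderB_shift :
    MeasurableSet[⨆ i ∈ Set.Ioi a, MeasurableSpace.comap (ξ i) inferInstance]
      (ladderB (fun n ω => ξ (n + a) ω) L U x m) := by
  -- installs the future σ-algebra as the instance that `measurable_pi_lambda` looks for
  let : MeasurableSpace α := ⨆ i ∈ Set.Ioi a, MeasurableSpace.comap (ξ i) inferInstance
  rw [ladderB_shift_eq_preimage]
  refine measurable_pi_lambda _ (fun i => ?_) MeasurableSet.of_discrete
  exact (comap_measurable (ξ (i + 1 + a))).mono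
    (le_iSup₂ (f := fun j (_ : j ∈ Set.Ioi a) => MeasurableSpace.comap (ξ j) inferInstance)
      (i + 1 + a) (by simp)) le_rfl

lemma measurableSet_preimage_of_le {i : ℕ} (hi : i ≤ a) (s : Set ℤ) :
    MeasurableSet[⨆ j ∈ Set.Iic a, MeasurableSpace.comap (ξ j) inferInstance]
      (ξ i ⁻¹' s) :=
  le_iSup₂ (f := fun j (_ : j ∈ Set.Iic a) => MeasurableSpace.comap (ξ j) inferInstance) i hi _
    (comap_measurable (ξ i) MeasurableSet.of_discrete)

lemma preimage_neg_one_eq_compl (hval : ∀ n ω, ξ n ω = 1 ∨ ξ n ω = -1) (n : ℕ) :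
    ξ n ⁻¹' {-1} = (ξ n ⁻¹' {1})ᶜ := by
  ext ω
  rcases hval n ω with h | h <;> simp [h]

end Windows

section Probability

variable {P : Measure Ω} {ξ : ℕ → Ω → ℤ} {p : ℝ} {L U x : ℤ} {a m : ℕ}

lemma measureReal_preimage_inter_preimage (hindep : iIndepFun ξ P) {i j : ℕ} (hij : i ≠ j)
    (s t : Set ℤ) :
    P.real (ξ i ⁻¹' s ∩ ξ j ⁻¹' t) = P.real (ξ i ⁻¹' s) * P.real (ξ j ⁻¹' t) := by
  simp only [measureReal_def, ← ENNReal.toReal_mul]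
  rw [(hindep.indepFun hij).measure_inter_preimage_eq_mul _ _
    MeasurableSet.of_discrete MeasurableSet.of_discrete]

lemma measureReal_preimage_one (hp0 : 0 ≤ p)
    (hprob : ∀ n, 1 ≤ n → P {ω | ξ n ω = 1} = ENNReal.ofReal p) {n : ℕ} (hn : 1 ≤ n) :
    P.real (ξ n ⁻¹' {1}) = p := by
  rw [measureReal_def, ← ENNReal.toReal_ofReal hp0, ← hprob n hn]
  rfl

variable [IsProbabilityMeasure P]

lemma map_eq_map_one (hmeas : ∀ n, Measurable (ξ n))
    (hval : ∀ n ω, ξ n ω = 1 ∨ ξ n ω = -1)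
    (hprob : ∀ n, 1 ≤ n → P {ω | ξ n ω = 1} = ENNReal.ofReal p) {n : ℕ} (hn : 1 ≤ n) :
    P.map (ξ n) = P.map (ξ 1) := by
  refine Measure.ext_iff_singleton.2 fun z => ?_
  rw [Measure.map_apply (hmeas n) MeasurableSet.of_discrete,
    Measure.map_apply (hmeas 1) MeasurableSet.of_discrete]
  have hone : P (ξ n ⁻¹' {1}) = P (ξ 1 ⁻¹' {1}) := (hprob n hn).trans (hprob 1 le_rfl).symm
  by_cases hz1 : z = 1
  · rw [hz1, hone]
  by_cases hz2 : z = -1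
  · rw [hz2, preimage_neg_one_eq_compl hval, preimage_neg_one_eq_compl hval,
      prob_compl_eq_one_sub (hmeas n MeasurableSet.of_discrete),
      prob_compl_eq_one_sub (hmeas 1 MeasurableSet.of_discrete), hone]
  have hempty (k : ℕ) : ξ k ⁻¹' {z} = ∅ :=
    Set.eq_empty_of_forall_notMem fun ω (hω : ξ k ω = z) => by
      rcases hval k ω with h | h <;> omega
  rw [hempty, hempty]

lemma map_ladderWindow_eq (hmeas : ∀ n, Measurable (ξ n))
    (hval : ∀ n ω, ξ n ω = 1 ∨ ξ n ω = -1)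
    (hprob : ∀ n, 1 ≤ n → P {ω | ξ n ω = 1} = ENNReal.ofReal p)
    (hindep : iIndepFun ξ P) :
    P.map (ladderWindow ξ a m) = P.map (ladderWindow ξ 0 m) := by
  have hpi (b : ℕ) :
      P.map (ladderWindow ξ b m) = Measure.pi fun i : Fin m => P.map (ξ (i + 1 + b)) :=
    (hindep.precomp (g := fun i : Fin m => (i : ℕ) + 1 + b) fun i j hij => by
      ext; simpa using hij).map_fun_eq_pi_map fun i => (hmeas _).aemeasurable
  rw [hpi, hpi]
  congr 1
  funext i
  exact (map_eq_map_one hmeas hval hprob (by omega)).trans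
    (map_eq_map_one hmeas hval hprob (by omega)).symm

lemma measure_ladderB_shift (hmeas : ∀ n, Measurable (ξ n))
    (hval : ∀ n ω, ξ n ω = 1 ∨ ξ n ω = -1)
    (hprob : ∀ n, 1 ≤ n → P {ω | ξ n ω = 1} = ENNReal.ofReal p)
    (hindep : iIndepFun ξ P) :
    P (ladderB (fun n ω => ξ (n + a) ω) L U x m) = P (ladderB ξ L U x m) := by
  have hwin (b : ℕ) : Measurable (ladderWindow ξ b m) := measurable_pi_lambda _ fun i => hmeas _
  change _ = P (ladderB (fun n ω => ξ (n + 0) ω) L U x m)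
  rw [ladderB_shift_eq_preimage, ladderB_shift_eq_preimage,
    ← Measure.map_apply (hwin a) MeasurableSet.of_discrete,
    ← Measure.map_apply (hwin 0) MeasurableSet.of_discrete,
    map_ladderWindow_eq hmeas hval hprob hindep]

lemma measureReal_inter_ladderB_shift (hmeas : ∀ n, Measurable (ξ n))
    (hval : ∀ n ω, ξ n ω = 1 ∨ ξ n ω = -1)
    (hprob : ∀ n, 1 ≤ n → P {ω | ξ n ω = 1} = ENNReal.ofReal p)
    (hindep : iIndepFun ξ P) {A : Set Ω}
    (hA : MeasurableSet[⨆ i ∈ Set.Iic a, MeasurableSpace.comap (ξ i) inferInstance] A) :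
    P.real (A ∩ ladderB (fun n ω => ξ (n + a) ω) L U x m)
      = P.real A * P.real (ladderB ξ L U x m) := by
  have hind := indep_iSup_of_disjoint (fun i => (hmeas i).comap_le)
    ((iIndepFun_iff_iIndep _ _ _).1 hindep) (S := Set.Iic a) (T := Set.Ioi a)
    (Set.Iic_disjoint_Ioi le_rfl)
  simp only [measureReal_def, ← ENNReal.toReal_mul]
  rw [(Indep_iff _ _ _).1 hind _ _ hA measurableSet_ladderB_shift,
    measure_ladderB_shift hmeas hval hprob hindep]

lemma measurableSet_ladderB_shift_of_measurable (hmeas : ∀ n, Measurable (ξ n)) :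
    MeasurableSet (ladderB (fun n ω => ξ (n + a) ω) L U x m) :=
  iSup₂_le (fun i _ => (hmeas i).comap_le) _ measurableSet_ladderB_shift

lemma measureReal_preimage_neg_one (hp0 : 0 ≤ p) (hmeas : ∀ n, Measurable (ξ n))
    (hval : ∀ n ω, ξ n ω = 1 ∨ ξ n ω = -1)
    (hprob : ∀ n, 1 ≤ n → P {ω | ξ n ω = 1} = ENNReal.ofReal p) {n : ℕ} (hn : 1 ≤ n) :
    P.real (ξ n ⁻¹' {-1}) = 1 - p := by
  rw [preimage_neg_one_eq_compl hval,
    probReal_compl_eq_one_sub (hmeas n MeasurableSet.of_discrete),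
    measureReal_preimage_one hp0 hprob hn]

lemma measureReal_ladderB_eq_add (hmeas : ∀ n, Measurable (ξ n))
    (hval : ∀ n ω, ξ n ω = 1 ∨ ξ n ω = -1) (hLU : U - L ≥ 4) (m : ℕ) :
    P.real (ladderB ξ L U (U - 2) (m + 2)) =
      P.real (ξ 1 ⁻¹' {1} ∩ ξ 2 ⁻¹' {1}) +
      P.real (ξ 1 ⁻¹' {1} ∩ ξ 2 ⁻¹' {-1} ∩
        ladderB (fun n ω => ξ (n + 2) ω) L U (U - 2) m) +
      P.real (ξ 1 ⁻¹' {-1} ∩ ladderB (fun n ω => ξ (n + 1) ω) L U (U - 3) (m + 1)) := by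
  have hdisj (i : ℕ) : Disjoint (ξ i ⁻¹' {1}) (ξ i ⁻¹' {-1}) :=
    Disjoint.preimage _ (by simp)
  have hpre (i : ℕ) (z : ℤ) : MeasurableSet (ξ i ⁻¹' {z}) :=
    hmeas i MeasurableSet.of_discrete
  rw [ladderB_eq_union_of_first_two_steps hval hLU, measureReal_union, measureReal_union]
  · exact (hdisj 2).mono Set.inter_subset_right
      (Set.inter_subset_left.trans Set.inter_subset_right)
  · exact ((hpre 1 1).inter (hpre 2 (-1))).inter (measurableSet_ladderB_shift_of_measurable hmeas)
  · exact (hdisj 1).mono (Set.union_subset Set.inter_subset_left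
      (Set.inter_subset_left.trans Set.inter_subset_left)) Set.inter_subset_left
  · exact (hpre 1 (-1)).inter (measurableSet_ladderB_shift_of_measurable hmeas)

end Probability

theorem ladder_betak_rec_second_general (p q : ℝ) (hp0 : 0 < p) (hq : q = 1 - p)
    (P : Measure Ω) [IsProbabilityMeasure P]
    (ξ : ℕ → Ω → ℤ) (hmeas : ∀ n, Measurable (ξ n))
    (hindep : iIndepFun ξ P)
    (hval : ∀ n ω, ξ n ω = 1 ∨ ξ n ω = -1)
    (hprob : ∀ n, 1 ≤ n → P {ω | ξ n ω = 1} = ENNReal.ofReal p)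
    (L U : ℤ) (hLU : U - L ≥ 4) (k : ℕ) (hk : 2 ≤ k) :
    (P (ladderB ξ L U (U - 2) k)).toReal
      = p ^ 2 + p * q * (P (ladderB ξ L U (U - 2) (k - 2))).toReal
        + q * (P (ladderB ξ L U (U - 3) (k - 1))).toReal := by
  obtain ⟨m, rfl⟩ : ∃ m, k = m + 2 := ⟨k - 2, by omega⟩
  subst hq
  have hup {n : ℕ} (hn : 1 ≤ n) : P.real (ξ n ⁻¹' {1}) = p :=
    measureReal_preimage_one hp0.le hprob hn
  have hdown {n : ℕ} (hn : 1 ≤ n) : P.real (ξ n ⁻¹' {-1}) = 1 - p :=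
    measureReal_preimage_neg_one hp0.le hmeas hval hprob hn
  have h_up_up : P.real (ξ 1 ⁻¹' {1} ∩ ξ 2 ⁻¹' {1}) = p ^ 2 := by
    rw [measureReal_preimage_inter_preimage hindep (by decide), hup le_rfl, hup (by omega), sq]
  have h_up_down : P.real (ξ 1 ⁻¹' {1} ∩ ξ 2 ⁻¹' {-1} ∩
      ladderB (fun n ω => ξ (n + 2) ω) L U (U - 2) m)
      = p * (1 - p) * P.real (ladderB ξ L U (U - 2) m) := by
    rw [measureReal_inter_ladderB_shift hmeas hval hprob hindep
      ((measurableSet_preimage_of_le (by omega) _).inter (measurableSet_preimage_of_le le_rfl _)),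
      measureReal_preimage_inter_preimage hindep (by decide), hup le_rfl, hdown (by omega)]
  have h_down :
      P.real (ξ 1 ⁻¹' {-1} ∩ ladderB (fun n ω => ξ (n + 1) ω) L U (U - 3) (m + 1))
      = (1 - p) * P.real (ladderB ξ L U (U - 3) (m + 1)) := by
    rw [measureReal_inter_ladderB_shift hmeas hval hprob hindep
      (measurableSet_preimage_of_le le_rfl _), hdown le_rfl]
  simp only [← measureReal_def, show m + 2 - 2 = m by omega, show m + 2 - 1 = m + 1 by omega]
  rw [measureReal_ladderB_eq_add hmeas hval hLU, h_up_up, h_up_down, h_down]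

/-- For `k ≥ 2`,
`β_k(U-2) = p² + pq·β_(k-2)(U-2) + q·β_(k-1)(U-3)`. -/
theorem ladder_betak_rec_second (p q : ℝ) (hp0 : 0 < p) (hp1 : p < 1) (hq : q = 1 - p)
    (P : Measure Ω) [IsProbabilityMeasure P]
    (ξ : ℕ → Ω → ℤ) (hmeas : ∀ n, Measurable (ξ n))
    (hindep : iIndepFun ξ P)
    (hval : ∀ n ω, ξ n ω = 1 ∨ ξ n ω = -1)
    (hprob : ∀ n, 1 ≤ n → P {ω | ξ n ω = 1} = ENNReal.ofReal p)
    (L U : ℤ) (hLU : U - L ≥ 4) (k : ℕ) (hk : 2 ≤ k) :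
    (P (ladderB ξ L U (U - 2) k)).toReal
      = p ^ 2 + p * q * (P (ladderB ξ L U (U - 2) (k - 2))).toReal
        + q * (P (ladderB ξ L U (U - 3) (k - 1))).toReal :=
  ladder_betak_rec_second_general p q hp0 hq P ξ hmeas hindep hval hprob L U hLU k hk
end
end
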